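/- Define recursively on [0,1]: T_1(x) = 2x, S_1(x) = 2^r(x − 1/2 + 2^{-r-1})_+ − 2^r(x − 1/2 − 2^{-r-1})_+, T_{j+1}(x) = (2T_j(x) − 2S_j(x))_+, S_{j+1}(x) = S_1(T_j(x) − S_j(x)). Let A_{j,r} = {x ∈ [0,1] : |[0.a_{j+1}^x a_{j+2}^x ...]_2 − 1/2| ≥ 2^{-r-1}}. Then for every x ∈ ∩_{j=1}^K A_{j,r} ∩ A_{0,r} and every 1 ≤ j ≤ K, S_j(x) = a_j^x, the j-th binary digit of x. -/

import Mathlib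

/-!
Write `t_j = [0.a_{j+1} a_{j+2} …]₂`. Then `t_j = a_{j+1}/2 + t_{j+1}/2` with `0 ≤ t_{j+1} ≤ 1`,
so the leading digit `a_{j+1}` records on which side of `1/2` the tail `t_j` lies. Away from the
window `|y - 1/2| < 2^{-r-1}` the ramp `S_1` is exactly the step `1(y > 1/2)`, hence
`S_1(t_j) = a_{j+1}` whenever `x ∈ A_{j,r}`. By induction the network keeps `T_{j+1} = 2 t_j`,
because `T_j - S_j = 2 t_{j-1} - a_j = t_j ≥ 0`, and therefore `S_{j+1} = S_1(t_j) = a_{j+1}`.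
-/

noncomputable section

/-- `S_1(x) = 2^r(x − 1/2 + 2^{-r-1})₊ − 2^r(x − 1/2 − 2^{-r-1})₊`. -/
def S1 (r : ℕ) (x : ℝ) : ℝ :=
  2 ^ r * max (x - 1/2 + ((2:ℝ) ^ (r + 1))⁻¹) 0 - 2 ^ r * max (x - 1/2 - ((2:ℝ) ^ (r + 1))⁻¹) 0

/-- `STrec r j x = (S_{j+1}(x), T_{j+1}(x))` (so index `j = 0` corresponds to `S_1, T_1`):
`T_1(x) = 2x`, and recursively `T_{j+1}(x) = (2T_j(x) − 2S_j(x))₊`,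
`S_{j+1}(x) = S_1(T_j(x) − S_j(x))`. -/
def STrec (r : ℕ) : ℕ → ℝ → ℝ × ℝ
  | 0, x => (S1 r x, 2 * x)
  | j + 1, x => (S1 r ((STrec r j x).2 - (STrec r j x).1), max (2 * (STrec r j x).2 - 2 * (STrec r j x).1) 0)

/-- The tail `t_j = [0.a_{j+1} a_{j+2} …]₂` of the header, with `d i` standing for `a_{i+1}`. -/
def binaryTail (d : ℕ → ℕ) (j : ℕ) : ℝ :=
  ∑' i : ℕ, (d (j + i) : ℝ) / 2 ^ (i + 1)

section BinaryTail

variable {d : ℕ → ℕ}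

lemma binaryTail_term_le (hd : ∀ i, d i ≤ 1) (j i : ℕ) :
    (d (j + i) : ℝ) / 2 ^ (i + 1) ≤ 1 / 2 / 2 ^ i := by
  have hdi : (d (j + i) : ℝ) ≤ 1 := by exact_mod_cast hd (j + i)
  calc (d (j + i) : ℝ) / 2 ^ (i + 1) ≤ 1 / 2 ^ (i + 1) := by gcongr
    _ = 1 / 2 / 2 ^ i := by rw [pow_succ]; ring

lemma summable_binaryTail (hd : ∀ i, d i ≤ 1) (j : ℕ) :
    Summable fun i : ℕ => (d (j + i) : ℝ) / 2 ^ (i + 1) :=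
  (summable_geometric_two' 1).of_nonneg_of_le (fun _ => by positivity) (binaryTail_term_le hd j)

lemma binaryTail_nonneg (d : ℕ → ℕ) (j : ℕ) : 0 ≤ binaryTail d j :=
  tsum_nonneg fun _ => by positivity

lemma binaryTail_le_one (hd : ∀ i, d i ≤ 1) (j : ℕ) : binaryTail d j ≤ 1 :=
  calc binaryTail d j ≤ ∑' i : ℕ, (1 : ℝ) / 2 / 2 ^ i :=
        (summable_binaryTail hd j).tsum_le_tsum (binaryTail_term_le hd j) (summable_geometric_two' 1)
    _ = 1 := tsum_geometric_two' 1

lemma binaryTail_eq_half_add (hd : ∀ i, d i ≤ 1) (j : ℕ) :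
    binaryTail d j = d j / 2 + binaryTail d (j + 1) / 2 := by
  rw [binaryTail, (summable_binaryTail hd j).tsum_eq_zero_add, binaryTail, ← tsum_div_const]
  congr 1
  · norm_num
  · refine tsum_congr fun i => ?_
    rw [show j + (i + 1) = j + 1 + i by omega, pow_succ]
    ring

lemma binaryTail_le_half_of_eq_zero (hd : ∀ i, d i ≤ 1) {j : ℕ} (h : d j = 0) :
    binaryTail d j ≤ 1 / 2 := by
  have := binaryTail_eq_half_add hd j
  rw [h, Nat.cast_zero] at this
  linarith [binaryTail_le_one hd (j + 1)]

lemma half_le_binaryTail_of_eq_one (hd : ∀ i, d i ≤ 1) {j : ℕ} (h : d j = 1) :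
    1 / 2 ≤ binaryTail d j := by
  have := binaryTail_eq_half_add hd j
  rw [h, Nat.cast_one] at this
  linarith [binaryTail_nonneg d (j + 1)]

end BinaryTail

section Ramp

variable {r : ℕ} {y : ℝ}

lemma S1_eq_zero_of_le (h : y ≤ 1 / 2 - ((2 : ℝ) ^ (r + 1))⁻¹) : S1 r y = 0 := by
  have hpos : (0 : ℝ) < ((2 : ℝ) ^ (r + 1))⁻¹ := by positivity
  rw [S1, max_eq_right (by linarith), max_eq_right (by linarith)]
  ring

lemma S1_eq_one_of_le (h : 1 / 2 + ((2 : ℝ) ^ (r + 1))⁻¹ ≤ y) : S1 r y = 1 := by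
  have hpos : (0 : ℝ) < ((2 : ℝ) ^ (r + 1))⁻¹ := by positivity
  rw [S1, max_eq_left (by linarith), max_eq_left (by linarith), pow_succ]
  field_simp
  ring

end Ramp

lemma S1_binaryTail {r : ℕ} {d : ℕ → ℕ} (hd : ∀ i, d i ≤ 1) {j : ℕ}
    (hgap : ((2 : ℝ) ^ (r + 1))⁻¹ ≤ |binaryTail d j - 1 / 2|) :
    S1 r (binaryTail d j) = d j := by
  rcases Nat.le_one_iff_eq_zero_or_eq_one.mp (hd j) with h | h
  · have hle := binaryTail_le_half_of_eq_zero hd h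
    rw [abs_of_nonpos (by linarith)] at hgap
    rw [h, Nat.cast_zero]
    exact S1_eq_zero_of_le (by linarith)
  · have hge := half_le_binaryTail_of_eq_one hd h
    rw [abs_of_nonneg (by linarith)] at hgap
    rw [h, Nat.cast_one]
    exact S1_eq_one_of_le (by linarith)

lemma STrec_binaryTail {r : ℕ} {d : ℕ → ℕ} (hd : ∀ i, d i ≤ 1) {j : ℕ}
    (hS : ∀ i ≤ j, S1 r (binaryTail d i) = d i) :
    STrec r j (binaryTail d 0) = ((d j : ℝ), 2 * binaryTail d j) := by
  induction j with
  | zero => simp [STrec, hS 0 le_rfl]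
  | succ j ih =>
    have hT : 2 * binaryTail d j - d j = binaryTail d (j + 1) := by
      linarith [binaryTail_eq_half_add hd j]
    rw [STrec, ih fun i hi => hS i (by omega)]
    dsimp only
    rw [hT, hS (j + 1) le_rfl, ← mul_sub, hT, max_eq_left (by linarith [binaryTail_nonneg d (j + 1)])]

theorem stmt16_general (r K : ℕ) (a : ℝ → ℕ → ℕ) (x : ℝ)
    (hdig : ∀ i, a x i ≤ 1)
    (hsum : x = ∑' i : ℕ, (a x i : ℝ) / 2 ^ (i + 1))
    (hA : ∀ j ≤ K, ((2:ℝ) ^ (r + 1))⁻¹ ≤ |(∑' i : ℕ, (a x (j + i) : ℝ) / 2 ^ (i + 1)) - 1/2|) :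
    ∀ j, 1 ≤ j → j ≤ K → (STrec r (j - 1) x).1 = a x (j - 1) := by
  intro j _ hjK
  have hx : x = binaryTail (a x) 0 := by simpa [binaryTail] using hsum
  have hS : ∀ i ≤ j - 1, S1 r (binaryTail (a x) i) = a x i :=
    fun i hi => S1_binaryTail hdig (hA i (by omega))
  have hnet := STrec_binaryTail hdig hS
  rw [← hx] at hnet
  exact congrArg Prod.fst hnet

/-- With `A_{j,r} = {x ∈ [0,1] : |[0.a_{j+1}^x a_{j+2}^x …]_2 − 1/2| ≥ 2^{-r-1}}`,
for every `x ∈ ⋂_{j=1}^K A_{j,r} ∩ A_{0,r}` and every `1 ≤ j ≤ K`, `S_j(x) = a_j^x`, the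
`j`-th binary digit of `x`.  Here `a x i` denotes the digit `a_{i+1}^x` of a fixed binary
expansion of `x`. -/
theorem stmt16 (r K : ℕ) (hr : 1 ≤ r) (hK : 1 ≤ K) (a : ℝ → ℕ → ℕ) (x : ℝ)
    (hx : x ∈ Set.Icc (0:ℝ) 1) (hdig : ∀ i, a x i ≤ 1)
    (hsum : x = ∑' i : ℕ, (a x i : ℝ) / 2 ^ (i + 1))
    (hA : ∀ j ≤ K, ((2:ℝ) ^ (r + 1))⁻¹ ≤ |(∑' i : ℕ, (a x (j + i) : ℝ) / 2 ^ (i + 1)) - 1/2|) :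
    ∀ j, 1 ≤ j → j ≤ K → (STrec r (j - 1) x).1 = a x (j - 1) :=
  stmt16_general r K a x hdig hsum hA

end
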